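/- Let F be a voting method whose domain is the set of all profiles. If F satisfies ordinal margin invariance and weak positive responsiveness, then F selects a unique winner in every uniquely-weighted profile: for every profile P such that Margin_P(a,b) ≠ Margin_P(c,d) whenever a ≠ b, c ≠ d, and (a,b) ≠ (c,d), we have |F(P)| = 1. -/

import Mathlib

/-!
Formalization of notions from "An extension of May's Theorem to three
alternatives: axiomatizing Minimax voting" by Holliday and Pacuit.

The set of voters is the countably infinite set `ℕ`; the set `α` of
alternatives is a type (assumed to have at least three elements where the
paper assumes `|𝒳| ≥ 3`).
-/

namespace MayMinimax

/-- A profile: a finite set of voters drawn from the countably infinite set `ℕ`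
of all voters, a finite set of alternatives, and, for each voter, a binary
relation on alternatives given as a Boolean-valued function:
`P.rel i a b = true` means that voter `i` ranks `a` above `b`. -/
structure Profile (α : Type*) where
  voters : Finset ℕ
  alts : Finset α
  rel : ℕ → α → α → Bool

variable {α : Type*} [DecidableEq α]

/-- Each voter's ballot is a strict weak order (asymmetric and negatively
transitive) on the alternatives. -/
def IsSWO (P : Profile α) : Prop :=
  ∀ i ∈ P.voters,
    (∀ a ∈ P.alts, ∀ b ∈ P.alts, P.rel i a b = true → P.rel i b a = false) ∧
    (∀ a ∈ P.alts, ∀ b ∈ P.alts, ∀ c ∈ P.alts,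
      P.rel i a b = false → P.rel i b c = false → P.rel i a c = false)

/-- The margin of `a` over `b` in `P`: the number of voters ranking `a` above
`b` minus the number of voters ranking `b` above `a`. -/
def Margin (P : Profile α) (a b : α) : ℤ :=
  ((P.voters.filter fun i => P.rel i a b = true).card : ℤ) -
    ((P.voters.filter fun i => P.rel i b a = true).card : ℤ)

/-- The number of voters ranking `a` above `b` in `P`. -/
def Support (P : Profile α) (a b : α) : ℕ :=
  (P.voters.filter fun i => P.rel i a b = true).card

/-- The Minimax score of `a`: the maximum margin of any other alternative over `a`. -/
def MMScore (P : Profile α) (a : α) : ℤ :=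
  WithBot.unbotD 0 (((P.alts.erase a).image fun b => Margin P b a).max)

/-- The set of Minimax winners: alternatives with minimal Minimax score. -/
def Minimax (P : Profile α) : Finset α :=
  P.alts.filter fun a => ∀ b ∈ P.alts, MMScore P a ≤ MMScore P b

/-- Restriction of a profile to a subset `Y` of the alternatives. -/
def Profile.restrict (P : Profile α) (Y : Finset α) : Profile α where
  voters := P.voters
  alts := Y
  rel := fun i a b => P.rel i a b && decide (a ∈ Y) && decide (b ∈ Y)

/-- `P.minus b` is `P` restricted to `X(P) \ {b}`. -/
def Profile.minus (P : Profile α) (b : α) : Profile α :=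
  P.restrict (P.alts.erase b)

/-- The combination `P + Q` of two profiles (used with disjoint voter sets and
the same set of alternatives). -/
def Profile.combine (P Q : Profile α) : Profile α where
  voters := P.voters ∪ Q.voters
  alts := P.alts
  rel := fun i a b => if i ∈ P.voters then P.rel i a b else Q.rel i a b

/-- `2P`: the profile `P` together with a copy of `P` on a disjoint set of voters. -/
def Profile.double (P : Profile α) : Profile α where
  voters := P.voters ∪ P.voters.image fun i => i + (P.voters.sup id + 1)
  alts := P.alts
  rel := fun i a b =>
    if i ∈ P.voters then P.rel i a b else P.rel (i - (P.voters.sup id + 1)) a b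

/-- `r` is (the strict part of) a linear order on the finite set `X`. -/
def IsLinearOn (r : α → α → Bool) (X : Finset α) : Prop :=
  (∀ a ∈ X, r a a = false) ∧
  (∀ a ∈ X, ∀ b ∈ X, ∀ c ∈ X, r a b = true → r b c = true → r a c = true) ∧
  (∀ a ∈ X, ∀ b ∈ X, a ≠ b → (r a b = true ∨ r b a = true)) ∧
  (∀ a ∈ X, ∀ b ∈ X, r a b = true → r b a = false)

/-- `Q` is a block profile for the set `X` of alternatives: it contains, for
each linear order of `X`, exactly one voter submitting that linear order, and
no other voters. -/
def IsBlock (X : Finset α) (Q : Profile α) : Prop :=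
  Q.alts = X ∧
  (∀ i ∈ Q.voters, IsLinearOn (Q.rel i) X) ∧
  (∀ r : α → α → Bool, IsLinearOn r X →
    ∃! i, i ∈ Q.voters ∧ ∀ a ∈ X, ∀ b ∈ X, Q.rel i a b = r a b)

/-- `P'` is obtained from `P` by one voter who ranked `a` uniquely last in `P`
switching to ranking `a` uniquely first in `P'`, with the restriction of that
voter's relation to `X(P) \ {a}` unchanged and all other voters' relations
unchanged. -/
def MoveLastToFirst (P P' : Profile α) (a : α) : Prop :=
  P'.voters = P.voters ∧ P'.alts = P.alts ∧ a ∈ P.alts ∧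
  ∃ i ∈ P.voters,
    (∀ b ∈ P.alts, b ≠ a → P.rel i b a = true) ∧
    (∀ b ∈ P.alts, b ≠ a → P'.rel i a b = true) ∧
    (∀ b ∈ P.alts, b ≠ a → ∀ c ∈ P.alts, c ≠ a → P'.rel i b c = P.rel i b c) ∧
    (∀ j ∈ P.voters, j ≠ i → ∀ x ∈ P.alts, ∀ y ∈ P.alts, P'.rel j x y = P.rel j x y)

/-- `P'` is obtained from `P` by adding one new voter who ranks `a` uniquely
first, all old voters' relations being unchanged. -/
def AddTopVoter (P P' : Profile α) (a : α) : Prop :=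
  P'.alts = P.alts ∧
  ∃ j, j ∉ P.voters ∧ P'.voters = insert j P.voters ∧
    (∀ b ∈ P.alts, b ≠ a → P'.rel j a b = true) ∧
    (∀ i ∈ P.voters, ∀ x ∈ P.alts, ∀ y ∈ P.alts, P'.rel i x y = P.rel i x y)

/-- `P'` is obtained from `P` by one voter improving the position of `a` in
their ballot, while nothing else changes. -/
def ImproveFor (P P' : Profile α) (a : α) : Prop :=
  P'.voters = P.voters ∧ P'.alts = P.alts ∧
  ∃ i ∈ P.voters,
    (∃ b ∈ P.alts, b ≠ a ∧
      ((P.rel i a b = false ∧ P'.rel i a b = true) ∨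
        (P.rel i b a = true ∧ P'.rel i b a = false))) ∧
    (∀ c ∈ P.alts, c ≠ a →
      (P.rel i a c = true → P'.rel i a c = true) ∧
      (P.rel i c a = false → P'.rel i c a = false)) ∧
    (∀ c ∈ P.alts, c ≠ a → ∀ d ∈ P.alts, d ≠ a → P'.rel i c d = P.rel i c d) ∧
    (∀ j ∈ P.voters, j ≠ i → ∀ x ∈ P.alts, ∀ y ∈ P.alts, P'.rel j x y = P.rel j x y)

/-- Anonymity relative to a domain `D` of profiles. -/
def Anonymity (D : Set (Profile α)) (F : Profile α → Finset α) : Prop :=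
  ∀ P ∈ D, ∀ P' ∈ D, P.alts = P'.alts →
    (∃ π : Equiv.Perm ℕ, P.voters.image π = P'.voters ∧
      ∀ i ∈ P.voters, ∀ a ∈ P.alts, ∀ b ∈ P.alts, P.rel i a b = P'.rel (π i) a b) →
    F P = F P'

/-- Neutrality relative to a domain `D` of profiles. -/
def Neutrality (D : Set (Profile α)) (F : Profile α → Finset α) : Prop :=
  ∀ P ∈ D, ∀ P' ∈ D, P.voters = P'.voters →
    ∀ τ : Equiv.Perm α, P.alts.image τ = P'.alts →
      (∀ i ∈ P.voters, ∀ a ∈ P.alts, ∀ b ∈ P.alts, P.rel i a b = P'.rel i (τ a) (τ b)) →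
      (F P).image τ = F P'

/-- Weak positive responsiveness relative to a domain `D` of profiles. -/
def WeakPositiveResponsiveness (D : Set (Profile α)) (F : Profile α → Finset α) : Prop :=
  ∀ P ∈ D, ∀ P' ∈ D, ∀ a ∈ F P, MoveLastToFirst P P' a → F P' = {a}

/-- (Full) positive responsiveness relative to a domain `D` of profiles. -/
def PositiveResponsiveness (D : Set (Profile α)) (F : Profile α → Finset α) : Prop :=
  ∀ P ∈ D, ∀ P' ∈ D, ∀ a ∈ F P, ImproveFor P P' a → F P' = {a}

/-- Positive involvement relative to a domain `D` of profiles. -/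
def PositiveInvolvement (D : Set (Profile α)) (F : Profile α → Finset α) : Prop :=
  ∀ P ∈ D, ∀ P' ∈ D, ∀ a ∈ F P, AddTopVoter P P' a → a ∈ F P'

/-- Near immunity to spoilers relative to a domain `D` of profiles. -/
def NearImmunityToSpoilers (D : Set (Profile α)) (F : Profile α → Finset α) : Prop :=
  ∀ P ∈ D, ∀ a ∈ P.alts, ∀ b ∈ P.alts,
    P.minus b ∈ D → P.restrict {a, b} ∈ D →
    F (P.minus b) = {a} → F (P.restrict {a, b}) = {a} → b ∉ F P → a ∈ F P

/-- Immunity to spoilers relative to a domain `D` of profiles. -/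
def ImmunityToSpoilers (D : Set (Profile α)) (F : Profile α → Finset α) : Prop :=
  ∀ P ∈ D, ∀ a ∈ P.alts, ∀ b ∈ P.alts,
    P.minus b ∈ D → P.restrict {a, b} ∈ D →
    a ∈ F (P.minus b) → F (P.restrict {a, b}) = {a} → b ∉ F P → a ∈ F P

/-- (Inclusion) homogeneity relative to a domain `D` of profiles. -/
def Homogeneity (D : Set (Profile α)) (F : Profile α → Finset α) : Prop :=
  ∀ P ∈ D, P.double ∈ D ∧ F P ⊆ F P.double

/-- Block preservation relative to a domain `D` of profiles. -/
def BlockPreservation (D : Set (Profile α)) (F : Profile α → Finset α) : Prop :=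
  ∀ P ∈ D, ∀ Q ∈ D, Disjoint P.voters Q.voters → IsBlock P.alts Q →
    P.combine Q ∈ D ∧ F P ⊆ F (P.combine Q)

/-- Condorcet consistency relative to a domain `D` of profiles. -/
def CondorcetConsistent (D : Set (Profile α)) (F : Profile α → Finset α) : Prop :=
  ∀ P ∈ D, ∀ c ∈ P.alts, (∀ x ∈ P.alts, x ≠ c → 0 < Margin P c x) → F P = {c}

/-- The domain of all (strict-weak-order) profiles with exactly two alternatives. -/
def Dom2 (α : Type*) : Set (Profile α) :=
  {P | IsSWO P ∧ P.voters.Nonempty ∧ P.alts.card = 2}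

/-- The domain of all profiles with two or three alternatives. -/
def Dom23 (α : Type*) : Set (Profile α) :=
  {P | IsSWO P ∧ P.voters.Nonempty ∧ (P.alts.card = 2 ∨ P.alts.card = 3)}

/-- The domain of all profiles with at least two alternatives. -/
def DomGe2 (α : Type*) : Set (Profile α) :=
  {P | IsSWO P ∧ P.voters.Nonempty ∧ 2 ≤ P.alts.card}

/-- The domain of all profiles. -/
def DomAll (α : Type*) : Set (Profile α) :=
  {P | IsSWO P ∧ P.voters.Nonempty ∧ P.alts.Nonempty}

/-- The support-based Minimax score of `a`: the maximum of `Support P b a`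
over all `b` with a positive margin over `a` (`0` if there is no such `b`). -/
def SupportMMScore (P : Profile α) (a : α) : ℕ :=
  WithBot.unbotD 0 ((((P.alts.erase a).filter fun b => 0 < Margin P b a).image fun b =>
    Support P b a).max)

/-- Support-based Minimax: alternatives with minimal support-based Minimax score. -/
def SupportMinimax (P : Profile α) : Finset α :=
  P.alts.filter fun a => ∀ b ∈ P.alts, SupportMMScore P a ≤ SupportMMScore P b

/-- The set of weak Condorcet winners in `P`. -/
def WeakCondorcetWinners (P : Profile α) : Finset α :=
  P.alts.filter fun a => ∀ x ∈ P.alts, 0 ≤ Margin P a x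

/-- The plurality score of `a`: the number of voters ranking `a` uniquely first. -/
def PluralityScore (P : Profile α) (a : α) : ℕ :=
  (P.voters.filter fun i => ∀ b ∈ P.alts, b ≠ a → P.rel i a b = true).card

/-- The Condorcet-Plurality voting method: the weak Condorcet winners if there
are any; otherwise the alternatives with maximal plurality score. -/
def CP (P : Profile α) : Finset α :=
  if (WeakCondorcetWinners P).Nonempty then WeakCondorcetWinners P
  else P.alts.filter fun a => ∀ b ∈ P.alts, PluralityScore P b ≤ PluralityScore P a

/-- The marginal Borda score of `a`: the sum of the margins of `a` over the
alternatives. -/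
def MarginalBorda (P : Profile α) (a : α) : ℤ :=
  ∑ b ∈ P.alts, Margin P a b

/-- Minimax MB: the Minimax winners with greatest marginal Borda score. -/
def MinimaxMB (P : Profile α) : Finset α :=
  (Minimax P).filter fun a => ∀ b ∈ Minimax P, MarginalBorda P b ≤ MarginalBorda P a

/-- `P` and `P'` have the same ordinal margin graph. -/
def SameOrdinalMarginGraph (P P' : Profile α) : Prop :=
  P.alts = P'.alts ∧
  (∀ a ∈ P.alts, ∀ b ∈ P.alts, (0 < Margin P a b ↔ 0 < Margin P' a b)) ∧
  (∀ a ∈ P.alts, ∀ b ∈ P.alts, ∀ c ∈ P.alts, ∀ d ∈ P.alts,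
    (Margin P c d ≤ Margin P a b ↔ Margin P' c d ≤ Margin P' a b))

/-- Ordinal margin invariance relative to a domain `D` of profiles. -/
def OrdinalMarginInvariance (D : Set (Profile α)) (F : Profile α → Finset α) : Prop :=
  ∀ P ∈ D, ∀ P' ∈ D, SameOrdinalMarginGraph P P' → F P = F P'

/-- `P` is uniquely-weighted: distinct pairs of distinct alternatives have
distinct margins. -/
def UniquelyWeighted (P : Profile α) : Prop :=
  ∀ a ∈ P.alts, ∀ b ∈ P.alts, ∀ c ∈ P.alts, ∀ d ∈ P.alts,
    a ≠ b → c ≠ d → (a, b) ≠ (c, d) → Margin P a b ≠ Margin P c d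

end MayMinimax

/-!
Let `a ∈ F P` and let `Q` consist of four copies of `P` plus one voter. Its margins are
`4 * Margin P` perturbed by at most one, so, `P` being uniquely weighted, `Q` has the ordinal
margin graph of `P` whatever that voter's ballot is. If the voter ranks `a` uniquely last,
ordinal margin invariance gives `a ∈ F Q = F P`; moving `a` to the top of that ballot, weak
positive responsiveness makes `{a}` the outcome of a profile that again has the ordinal margin
graph of `P`, so `F P = {a}`.
-/

namespace MayMinimax

variable {α : Type*}

theorem mul_add_le_mul_add_iff {k m n e f : ℤ} (hk : 3 ≤ k) (he : |e| ≤ 1) (hf : |f| ≤ 1)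
    (h : m = n → e = f) : k * m + e ≤ k * n + f ↔ m ≤ n := by
  rw [abs_le] at he hf
  rcases lt_trichotomy m n with hmn | rfl | hmn
  · exact ⟨fun _ => hmn.le, fun _ => by nlinarith⟩
  · simp [h rfl]
  · exact ⟨fun _ => by nlinarith, fun h' => absurd h' (not_le.2 hmn)⟩

theorem mul_add_pos_iff {k m e : ℤ} (hk : 2 ≤ k) (he : |e| ≤ 1) (h : m = 0 → e = 0) :
    0 < k * m + e ↔ 0 < m := by
  rw [abs_le] at he
  rcases lt_trichotomy m 0 with hm | rfl | hm
  · exact ⟨fun _ => by nlinarith, fun h' => absurd h' (not_lt.2 hm.le)⟩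
  · simp [h rfl]
  · exact ⟨fun _ => hm, fun _ => by nlinarith⟩

theorem margin_self (P : Profile α) (x : α) : Margin P x x = 0 :=
  sub_self _

theorem margin_swap (P : Profile α) (x y : α) : Margin P y x = -Margin P x y :=
  (neg_sub _ _).symm

theorem UniquelyWeighted.margin_ne_zero {P : Profile α} (hP : UniquelyWeighted P) {x y : α}
    (hx : x ∈ P.alts) (hy : y ∈ P.alts) (hxy : x ≠ y) : Margin P x y ≠ 0 := by
  have hne := hP x hx y hy y hy x hx hxy hxy.symm (by simp [hxy])
  rw [margin_swap P x y] at hne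
  omega

theorem UniquelyWeighted.eq_of_margin_eq {P : Profile α} (hP : UniquelyWeighted P)
    {a b c d : α} (ha : a ∈ P.alts) (hb : b ∈ P.alts) (hc : c ∈ P.alts) (hd : d ∈ P.alts)
    (h : Margin P a b = Margin P c d) : (a = b ∧ c = d) ∨ (a = c ∧ b = d) := by
  by_cases hab : a = b <;> by_cases hcd : c = d
  · exact .inl ⟨hab, hcd⟩
  · subst hab
    exact absurd (h.symm.trans (margin_self P a)) (hP.margin_ne_zero hc hd hcd)
  · subst hcd
    exact absurd (h.trans (margin_self P c)) (hP.margin_ne_zero ha hb hab)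
  · by_contra hpair
    exact hP a ha b hb c hc d hd hab hcd (fun hp => hpair (.inr (Prod.ext_iff.1 hp))) h

/-- Distinct margins of `P` are at least one apart, so after scaling by `k ≥ 3` they are at
least three apart and a perturbation by at most one preserves their signs and their order. -/
theorem UniquelyWeighted.sameOrdinalMarginGraph {P P' : Profile α} (hP : UniquelyWeighted P)
    (halts : P'.alts = P.alts) {k : ℤ} (hk : 3 ≤ k) (e : α → α → ℤ)
    (he : ∀ x y, |e x y| ≤ 1) (he_self : ∀ x, e x x = 0)
    (hM : ∀ x y, Margin P' x y = k * Margin P x y + e x y) :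
    SameOrdinalMarginGraph P P' := by
  have he_eq : ∀ a ∈ P.alts, ∀ b ∈ P.alts, ∀ c ∈ P.alts, ∀ d ∈ P.alts,
      Margin P a b = Margin P c d → e a b = e c d := by
    intro a ha b hb c hc d hd h
    rcases hP.eq_of_margin_eq ha hb hc hd h with ⟨rfl, rfl⟩ | ⟨rfl, rfl⟩
    · rw [he_self, he_self]
    · rfl
  refine ⟨halts.symm, fun a ha b hb => ?_, fun a ha b hb c hc d hd => ?_⟩
  · rw [hM, mul_add_pos_iff (by omega) (he a b) fun h => ?_]
    rw [he_eq a ha b hb a ha a ha (h.trans (margin_self P a).symm), he_self]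
  · rw [hM, hM, mul_add_le_mul_add_iff hk (he c d) (he a b) (he_eq c hc d hd a ha b hb)]

theorem card_filter_rel_double (P : Profile α) (x y : α) :
    (P.double.voters.filter fun i => P.double.rel i x y = true).card =
      2 * (P.voters.filter fun i => P.rel i x y = true).card := by
  set s := P.voters.sup id + 1
  have hshift : ∀ i ∈ P.voters, i + s ∉ P.voters := fun i _ h => by
    have := Finset.le_sup (f := id) h
    simp only [id] at this
    omega
  have hdisj : Disjoint P.voters (P.voters.image (· + s)) := by
    simp only [Finset.disjoint_left, Finset.mem_image, not_exists, not_and]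
    rintro _ hi k hk rfl
    exact hshift k hk hi
  rw [show P.double.voters = P.voters ∪ P.voters.image (· + s) from rfl, Finset.filter_union,
    Finset.card_union_of_disjoint (Finset.disjoint_filter_filter hdisj), Finset.filter_image,
    Finset.card_image_of_injective _ (add_left_injective s), two_mul]
  congr 2
  · exact Finset.filter_congr fun i hi => by simp only [Profile.double, if_pos hi]
  · exact Finset.filter_congr fun i hi => by
      simp only [Profile.double, if_neg (hshift i hi), s, Nat.add_sub_cancel]

theorem margin_double (P : Profile α) (x y : α) : Margin P.double x y = 2 * Margin P x y := by
  simp only [Margin, card_filter_rel_double]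
  push_cast
  ring

def Profile.addVoter (P : Profile α) (j : ℕ) (r : α → α → Bool) : Profile α where
  voters := insert j P.voters
  alts := P.alts
  rel i := if i = j then r else P.rel i

def ballotMargin (r : α → α → Bool) (x y : α) : ℤ :=
  (r x y).toNat - (r y x).toNat

theorem abs_ballotMargin_le_one (r : α → α → Bool) (x y : α) :
    |ballotMargin r x y| ≤ 1 := by
  unfold ballotMargin
  cases r x y <;> cases r y x <;> simp

theorem ballotMargin_self (r : α → α → Bool) (x : α) : ballotMargin r x x = 0 :=
  sub_self _

theorem card_filter_rel_addVoter {P : Profile α} {j : ℕ} (hj : j ∉ P.voters)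
    (r : α → α → Bool) (x y : α) :
    ((P.addVoter j r).voters.filter fun i => (P.addVoter j r).rel i x y = true).card =
      (P.voters.filter fun i => P.rel i x y = true).card + (r x y).toNat := by
  have hrest : (P.voters.filter fun i => (P.addVoter j r).rel i x y = true) =
      P.voters.filter fun i => P.rel i x y = true :=
    Finset.filter_congr fun i hi => by
      simp only [Profile.addVoter, if_neg (ne_of_mem_of_not_mem hi hj)]
  have hj' : j ∉ P.voters.filter fun i => P.rel i x y = true :=
    fun h => hj (Finset.mem_of_mem_filter j h)
  have hrj : (P.addVoter j r).rel j x y = r x y := by simp [Profile.addVoter]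
  rw [show (P.addVoter j r).voters = insert j P.voters from rfl, Finset.filter_insert, hrj]
  cases r x y
  · simp [hrest]
  · simp [Finset.card_insert_of_notMem hj', hrest]

theorem margin_addVoter {P : Profile α} {j : ℕ} (hj : j ∉ P.voters) (r : α → α → Bool)
    (x y : α) : Margin (P.addVoter j r) x y = Margin P x y + ballotMargin r x y := by
  simp only [Margin, card_filter_rel_addVoter hj, ballotMargin]
  push_cast
  ring

def IsSWOOn (r : α → α → Bool) (X : Finset α) : Prop :=
  (∀ a ∈ X, ∀ b ∈ X, r a b = true → r b a = false) ∧
  (∀ a ∈ X, ∀ b ∈ X, ∀ c ∈ X, r a b = false → r b c = false → r a c = false)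

theorem isSWO_iff (P : Profile α) : IsSWO P ↔ ∀ i ∈ P.voters, IsSWOOn (P.rel i) P.alts :=
  Iff.rfl

theorem addVoter_mem_domAll {P : Profile α} (hP : P ∈ DomAll α) (j : ℕ)
    {r : α → α → Bool} (hr : IsSWOOn r P.alts) : P.addVoter j r ∈ DomAll α := by
  refine ⟨(isSWO_iff _).2 fun i hi => ?_, Finset.insert_nonempty j _, hP.2.2⟩
  show IsSWOOn (if i = j then r else P.rel i) P.alts
  by_cases hij : i = j
  · rwa [if_pos hij]
  · rw [if_neg hij]
    exact hP.1 i ((Finset.mem_insert.1 hi).resolve_left hij)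

theorem double_mem_domAll {P : Profile α} (hP : P ∈ DomAll α) : P.double ∈ DomAll α := by
  refine ⟨(isSWO_iff _).2 fun i hi => ?_, hP.2.1.mono Finset.subset_union_left, hP.2.2⟩
  by_cases hiP : i ∈ P.voters
  · simp only [Profile.double, hiP, if_true]
    exact hP.1 i hiP
  · obtain ⟨k, hk, rfl⟩ := Finset.mem_image.1 ((Finset.mem_union.1 hi).resolve_left hiP)
    simp only [Profile.double, hiP, if_false, Nat.add_sub_cancel]
    exact hP.1 k hk

def bottomBallot [DecidableEq α] (a x y : α) : Bool :=
  decide (y = a ∧ x ≠ a)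

def topBallot [DecidableEq α] (a x y : α) : Bool :=
  decide (x = a ∧ y ≠ a)

theorem isSWOOn_bottomBallot [DecidableEq α] (a : α) (X : Finset α) :
    IsSWOOn (bottomBallot a) X :=
  ⟨fun x _ y _ => by simp only [bottomBallot]; grind,
    fun x _ y _ z _ => by simp only [bottomBallot]; grind⟩

theorem isSWOOn_topBallot [DecidableEq α] (a : α) (X : Finset α) :
    IsSWOOn (topBallot a) X :=
  ⟨fun x _ y _ => by simp only [topBallot]; grind,
    fun x _ y _ z _ => by simp only [topBallot]; grind⟩

theorem moveLastToFirst_addVoter [DecidableEq α] {P : Profile α} {a : α} (ha : a ∈ P.alts)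
    (j : ℕ) : MoveLastToFirst (P.addVoter j (bottomBallot a)) (P.addVoter j (topBallot a)) a :=
  ⟨rfl, rfl, ha, j, Finset.mem_insert_self j P.voters,
    fun b _ hb => by simp [Profile.addVoter, bottomBallot, hb],
    fun b _ hb => by simp [Profile.addVoter, topBallot, hb],
    fun b _ hb c _ hc => by simp [Profile.addVoter, topBallot, bottomBallot, hb, hc],
    fun i _ hij x _ y _ => by simp [Profile.addVoter, hij]⟩

theorem UniquelyWeighted.sameOrdinalMarginGraph_addVoter {P : Profile α}
    (hP : UniquelyWeighted P) {j : ℕ} (hj : j ∉ P.double.double.voters)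
    (r : α → α → Bool) :
    SameOrdinalMarginGraph P (P.double.double.addVoter j r) :=
  hP.sameOrdinalMarginGraph rfl (k := 4) (by norm_num) (ballotMargin r)
    (abs_ballotMargin_le_one r) (ballotMargin_self r) fun x y => by
      rw [margin_addVoter hj, margin_double, margin_double, ← mul_assoc]
      norm_num

theorem omi_wpr_implies_resolute_on_uniquely_weighted_general {α : Type*} [DecidableEq α]
    (F : Profile α → Finset α)
    (hF : ∀ P ∈ DomAll α, (F P).Nonempty ∧ F P ⊆ P.alts)
    (omi : OrdinalMarginInvariance (DomAll α) F)
    (wpr : WeakPositiveResponsiveness (DomAll α) F) :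
    ∀ P ∈ DomAll α, UniquelyWeighted P → (F P).card = 1 := by
  intro P hP hUW
  obtain ⟨a, ha⟩ := (hF P hP).1
  set Q := P.double.double
  have hQ : Q ∈ DomAll α := double_mem_domAll (double_mem_domAll hP)
  obtain ⟨j, hj⟩ := Infinite.exists_notMem_finset Q.voters
  have hlast := addVoter_mem_domAll hQ j (isSWOOn_bottomBallot a P.alts)
  have hfirst := addVoter_mem_domAll hQ j (isSWOOn_topBallot a P.alts)
  have haQ : a ∈ F (Q.addVoter j (bottomBallot a)) :=
    omi P hP _ hlast (hUW.sameOrdinalMarginGraph_addVoter hj _) ▸ ha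
  rw [omi P hP _ hfirst (hUW.sameOrdinalMarginGraph_addVoter hj _),
    wpr _ hlast _ hfirst a haQ (moveLastToFirst_addVoter (P := Q) ((hF P hP).2 ha) j),
    Finset.card_singleton]

/-- A voting method on the domain of all profiles satisfying ordinal margin
invariance and weak positive responsiveness selects a unique winner in every
uniquely-weighted profile. -/
theorem omi_wpr_implies_resolute_on_uniquely_weighted {α : Type*} [DecidableEq α]
    (hX : ∃ x y z : α, x ≠ y ∧ x ≠ z ∧ y ≠ z)
    (F : Profile α → Finset α)
    (hF : ∀ P ∈ DomAll α, (F P).Nonempty ∧ F P ⊆ P.alts)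
    (omi : OrdinalMarginInvariance (DomAll α) F)
    (wpr : WeakPositiveResponsiveness (DomAll α) F) :
    ∀ P ∈ DomAll α, UniquelyWeighted P → (F P).card = 1 :=
  omi_wpr_implies_resolute_on_uniquely_weighted_general F hF omi wpr

end MayMinimax
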